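/- Let Q be a primitive string and let i ≥ 1 be an integer that is not a multiple of |Q|. Then for every integer m ≥ 1, hd(Q^∞[1..m], Q^∞[i+1..i+m]) ≥ ⌊m/|Q|⌋. -/

import Mathlib

/-!
The positions `t` at which `Q^∞` and its shift by `i` disagree form a `|Q|`-periodic set, so
every block of `|Q|` consecutive positions contains one as soon as `[0, |Q|)` does. If `[0, |Q|)`
contained none, `Q^∞` would have the periods `i` and `|Q|`, hence the period `gcd(i, |Q|) < |Q|`,
and `Q` would be a proper power of its prefix of that length.
-/

variable {α : Type*}

/-- Hamming distance: the number of positions at which two (equal-length) strings differ. -/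
def hamDist [DecidableEq α] (S T : List α) : ℕ :=
  ((S.zip T).filter fun c => decide (c.1 ≠ c.2)).length

/-- 1-based substring `T[i..j]` (inclusive). -/
def substr (T : List α) (i j : ℕ) : List α := (T.drop (i - 1)).take (j - i + 1)

/-- `Q^m`: the concatenation of `m` copies of `Q`. -/
def listPow (Q : List α) (m : ℕ) : List α := (List.replicate m Q).flatten

/-- `Q^∞[a..b]`: the segment from position `a` through `b` (1-based) of the infinite
periodic string `Q^∞` with `Q^∞[i] = Q[((i−1) mod |Q|) + 1]`. -/
def infSeg (Q : List α) (a b : ℕ) : List α := substr (listPow Q b) a b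

/-- A nonempty string is primitive if it is not a power of a strictly shorter string,
i.e. it equals `R^m` only for `m = 1`. -/
def PrimitiveStr (Q : List α) : Prop :=
  Q ≠ [] ∧ ∀ (R : List α) (m : ℕ), Q = listPow R m → m = 1

/-- The forward cyclic rotation `rot(S) = S[m]·S[1..m−1]`. -/
def rot (S : List α) : List α := S.rotate (S.length - 1)

/-- `p` is a `k`-mismatch period of `T`: `1 ≤ p ≤ |T|` and
`hd(T[1..n−p+1], T[p..n]) ≤ k`. -/
def IsMismatchPeriod [DecidableEq α] (k p : ℕ) (T : List α) : Prop :=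
  1 ≤ p ∧ p ≤ T.length ∧
    hamDist (substr T 1 (T.length - p + 1)) (substr T p T.length) ≤ k

open Function

theorem Function.Periodic.nat_gcd {β : Type*} {f : ℕ → β} {a b : ℕ} (ha : Periodic f a)
    (hb : Periodic f b) : Periodic f (a.gcd b) := by
  induction a, b using Nat.gcd.induction with
  | H0 n => simpa using hb
  | H1 m n _ ih =>
    rw [Nat.gcd_rec]
    refine ih (fun x => ?_) ha
    calc f (x + n % m) = f (x + n % m + n / m * m) := ((ha.nat_mul _) _).symm
      _ = f (x + n) := by rw [add_assoc, Nat.mod_add_div']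
      _ = f x := hb x

theorem Function.Periodic.count_mul {p : ℕ → Prop} [DecidablePred p] {c : ℕ}
    (hp : Periodic p c) (n : ℕ) : Nat.count p (n * c) = n * Nat.count p c := by
  induction n with
  | zero => simp
  | succ n ih =>
    have hshift : (fun k => p (n * c + k)) = p := funext fun k => by
      rw [add_comm]; exact hp.nat_mul n k
    rw [add_mul, one_mul, Nat.count_add, ih]
    simp only [hshift]
    ring

theorem Function.Periodic.div_mul_count_le {p : ℕ → Prop} [DecidablePred p] {c : ℕ}
    (hp : Periodic p c) (m : ℕ) : m / c * Nat.count p c ≤ Nat.count p m :=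
  calc m / c * Nat.count p c = Nat.count p (m / c * c) := (hp.count_mul _).symm
    _ ≤ Nat.count p m := Nat.count_monotone p (Nat.div_mul_le_self m c)

theorem length_listPow (Q : List α) (m : ℕ) : (listPow Q m).length = m * Q.length := by
  simp [listPow]

theorem listPow_succ (Q : List α) (m : ℕ) : listPow Q (m + 1) = Q ++ listPow Q m := by
  simp [listPow, List.replicate_succ]

theorem getElem_listPow (Q : List α) (hQ : 0 < Q.length) (m n : ℕ)
    (h : n < (listPow Q m).length) :
    (listPow Q m)[n] = Q[n % Q.length]'(Nat.mod_lt n hQ) := by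
  induction m generalizing n with
  | zero => simp [length_listPow] at h
  | succ m ih =>
    simp only [listPow_succ, List.length_append] at h ⊢
    by_cases hn : n < Q.length
    · simp [List.getElem_append_left hn, Nat.mod_eq_of_lt hn]
    · rw [List.getElem_append_right (by omega), ih _ (by omega)]
      simp only [← Nat.mod_eq_sub_mod (by omega : Q.length ≤ n)]

theorem eq_listPow_take_of_getElem_mod (Q : List α) {g : ℕ} (hg : 0 < g) (hgQ : g ∣ Q.length)
    (h : ∀ n (hn : n < Q.length), Q[n] = Q[n % g]'((Nat.mod_le n g).trans_lt hn)) :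
    Q = listPow (Q.take g) (Q.length / g) := by
  rcases Nat.eq_zero_or_pos Q.length with h0 | hpos
  · simp [List.length_eq_zero_iff.mp h0, listPow]
  have hlen : (Q.take g).length = g := List.length_take_of_le (Nat.le_of_dvd hpos hgQ)
  apply List.ext_getElem
  · rw [length_listPow, hlen, Nat.div_mul_cancel hgQ]
  · intro n hn _
    simp [getElem_listPow _ (hlen ▸ hg), hlen, h n hn]

/-- `cyclicGet Q hQ n = Q^∞[n + 1]`: positions are `0`-based. -/
def cyclicGet (Q : List α) (hQ : 0 < Q.length) (n : ℕ) : α := Q[n % Q.length]'(Nat.mod_lt n hQ)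

theorem periodic_cyclicGet (Q : List α) (hQ : 0 < Q.length) :
    Periodic (cyclicGet Q hQ) Q.length := fun n => by
  simp [cyclicGet]

theorem cyclicGet_of_lt (Q : List α) (hQ : 0 < Q.length) {n : ℕ} (hn : n < Q.length) :
    cyclicGet Q hQ n = Q[n] := by
  simp [cyclicGet, Nat.mod_eq_of_lt hn]

theorem PrimitiveStr.dvd_of_periodic_cyclicGet {Q : List α} (hQ : PrimitiveStr Q)
    (hq : 0 < Q.length) {d : ℕ} (hd : Periodic (cyclicGet Q hq) d) : Q.length ∣ d := by
  set q := Q.length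
  have hg : Periodic (cyclicGet Q hq) (d.gcd q) := hd.nat_gcd (periodic_cyclicGet Q hq)
  have hpow : Q = listPow (Q.take (d.gcd q)) (q / d.gcd q) :=
    eq_listPow_take_of_getElem_mod Q (Nat.gcd_pos_of_pos_right d hq) (Nat.gcd_dvd_right d q)
      fun n hn => by
        rw [← cyclicGet_of_lt Q hq hn, ← cyclicGet_of_lt Q hq ((Nat.mod_le _ _).trans_lt hn),
          hg.map_mod_nat]
  have hgq : d.gcd q = q := Nat.eq_of_dvd_of_div_eq_one (Nat.gcd_dvd_right d q) (hQ.2 _ _ hpow)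
  exact hgq ▸ Nat.gcd_dvd_left d q

theorem PrimitiveStr.exists_cyclicGet_ne {Q : List α} (hQ : PrimitiveStr Q) (hq : 0 < Q.length)
    {i : ℕ} (hi : ¬ Q.length ∣ i) : ∃ t < Q.length, cyclicGet Q hq t ≠ cyclicGet Q hq (i + t) := by
  by_contra! hall
  refine hi (hQ.dvd_of_periodic_cyclicGet hq fun t => ?_)
  have hF := periodic_cyclicGet Q hq
  calc cyclicGet Q hq (t + i) = cyclicGet Q hq ((i + t % Q.length) % Q.length) := by
        rw [Nat.add_mod_mod, add_comm, hF.map_mod_nat]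
    _ = cyclicGet Q hq (i + t % Q.length) := hF.map_mod_nat _
    _ = cyclicGet Q hq (t % Q.length) := (hall _ (Nat.mod_lt _ hq)).symm
    _ = cyclicGet Q hq t := hF.map_mod_nat t

theorem infSeg_add_eq_map (Q : List α) (hQ : 0 < Q.length) (a : ℕ) {m : ℕ} (hm : 1 ≤ m) :
    infSeg Q (a + 1) (a + m) = (List.range m).map fun t => cyclicGet Q hQ (a + t) := by
  have hlen := length_listPow Q (a + m)
  have hbig : a + m ≤ (a + m) * Q.length := Nat.le_mul_of_pos_right _ hQ
  unfold infSeg substr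
  rw [show a + 1 - 1 = a by omega, show a + m - (a + 1) + 1 = m by omega]
  apply List.ext_getElem
  · simp only [List.length_take, List.length_drop, hlen, List.length_map, List.length_range]
    omega
  · intro n _ _
    simp [getElem_listPow Q hQ, cyclicGet]

theorem hamDist_map_range [DecidableEq α] (f g : ℕ → α) (m : ℕ) :
    hamDist ((List.range m).map f) ((List.range m).map g) = Nat.count (fun t => f t ≠ g t) m := by
  unfold hamDist Nat.count
  rw [List.zip_map', List.filter_map, List.length_map, List.countP_eq_length_filter]
  rfl

theorem primitive_shift_mismatch_general [DecidableEq α] (Q : List α) (hQ : PrimitiveStr Q)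
    (i : ℕ) (hnd : ¬ Q.length ∣ i) :
    ∀ m : ℕ, 1 ≤ m →
      m / Q.length ≤ hamDist (infSeg Q 1 m) (infSeg Q (i + 1) (i + m)) := by
  intro m hm
  have hq : 0 < Q.length := List.length_pos_iff.mpr hQ.1
  set F := cyclicGet Q hq
  have hseg : infSeg Q 1 m = (List.range m).map F := by
    simpa using infSeg_add_eq_map Q hq 0 hm
  have hF : Periodic F Q.length := periodic_cyclicGet Q hq
  have hperiodic : Periodic (fun t => F t ≠ F (i + t)) Q.length := fun t => by
    simp only [hF t, hF.const_add i t]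
  have hcount : 1 ≤ Nat.count (fun t => F t ≠ F (i + t)) Q.length :=
    Nat.one_le_iff_ne_zero.mpr (Nat.count_ne_iff_exists.mpr (hQ.exists_cyclicGet_ne hq hnd))
  rw [hseg, infSeg_add_eq_map Q hq i hm, hamDist_map_range]
  calc m / Q.length = m / Q.length * 1 := (mul_one _).symm
    _ ≤ m / Q.length * Nat.count (fun t => F t ≠ F (i + t)) Q.length := Nat.mul_le_mul_left _ hcount
    _ ≤ _ := hperiodic.div_mul_count_le m

/-- if `Q` is primitive and `i ≥ 1` is not a multiple of `|Q|`, then for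
every `m ≥ 1`, `hd(Q^∞[1..m], Q^∞[i+1..i+m]) ≥ ⌊m/|Q|⌋`. -/
theorem primitive_shift_mismatch [DecidableEq α] (Q : List α) (hQ : PrimitiveStr Q)
    (i : ℕ) (hi : 1 ≤ i) (hnd : ¬ Q.length ∣ i) :
    ∀ m : ℕ, 1 ≤ m →
      m / Q.length ≤ hamDist (infSeg Q 1 m) (infSeg Q (i + 1) (i + m)) :=
  primitive_shift_mismatch_general Q hQ i hnd
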